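/- arXiv:2306.14344 — 2 statements merged into one kernel-verified Lean document; each statement's English description precedes it below -/
import Mathlib

section
/- Let {σ_{a|x}} be a family of positive semidefinite matrices in M_n(ℂ) (indexed by a ∈ {1,...,k}, x ∈ {1,...,m}) such that Σₐ σ_{a|x} = σ for some fixed density matrix σ and all x. Then there exist a finite-dimensional Hilbert space, a density matrix ρ on the tensor product with ℂⁿ, and POVM elements M_{a|x} on the first factor such that σ_{a|x} = Tr₁((M_{a|x} ⊗ 1) ρ) for all a, x. -/
/-!
Purify `S`: the vector `ψ = vec √S` is a pure state on `ℂⁿ ⊗ ℂⁿ` whose partial trace against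
`M ⊗ 1` is `√S Mᵀ √S`. Each `σ_{a|x}` lies between `0` and `S`, hence is supported on the range of
`S`, so with the pseudo-inverse `S^{-1/2}` the matrices `S^{-1/2} σ_{a|x} S^{-1/2}` are recovered
by this compression; for each `x` they sum to the projection onto the range of `S`. Adding the
complementary projection to one fixed outcome turns them into a POVM without changing the
compression, since `√S` annihilates the kernel of `S`.
-/

open Matrix
open scoped ComplexOrder MatrixOrder Kronecker

namespace Matrix

variable {𝕜 n : Type*} [RCLike 𝕜] [Fintype n]

theorem trace_vecMulVec_vec_star {d : Type*} [Fintype d] (X : Matrix n d 𝕜) :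
    (vecMulVec (vec X) (star (vec X))).trace = (Xᴴ * X).trace := by
  rw [trace_vecMulVec, dotProduct_comm, star_vec_dotProduct_vec]

theorem sum_kronecker_one_mul_vecMulVec_vec_apply {d : Type*} [Fintype d] [DecidableEq n]
    (X : Matrix n d 𝕜) (M : Matrix d d 𝕜) (i j : n) :
    ∑ t, ((M ⊗ₖ (1 : Matrix n n 𝕜)) * vecMulVec (vec X) (star (vec X))) (t, i) (t, j) =
      (X * Mᵀ * Xᴴ) i j := by
  rw [mul_vecMulVec, kronecker_mulVec_vec, Matrix.one_mul]
  simp only [vecMulVec_apply, vec, Pi.star_apply, mul_apply, conjTranspose_apply]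

variable [DecidableEq n]

theorem mul_eq_zero_of_le {A B X : Matrix n n 𝕜} (hA : 0 ≤ A) (hAB : A ≤ B) (hBX : B * X = 0) :
    A * X = 0 := by
  obtain ⟨Y, rfl⟩ := CStarAlgebra.nonneg_iff_eq_star_mul_self.mp hA
  have hYX : star (Y * X) * (Y * X) = 0 := by
    refine le_antisymm ?_ (star_mul_self_nonneg _)
    simpa [star_mul, mul_assoc, hBX] using star_left_conjugate_le_conjugate hAB X
  rw [star_eq_conjTranspose, conjTranspose_mul_self_eq_zero] at hYX
  rw [mul_assoc, hYX, mul_zero]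

variable {S : Matrix n n 𝕜}

theorem cfc_mul_cfc_of_nonneg (hS : 0 ≤ S) {f g h : ℝ → ℝ}
    (hfgh : ∀ t, 0 ≤ t → f t * g t = h t) : cfc f S * cfc g S = cfc h S := by
  rw [← cfc_mul f g S (finite_real_spectrum.continuousOn f) (finite_real_spectrum.continuousOn g)]
  exact cfc_congr fun t ht => hfgh t (spectrum_nonneg_of_nonneg hS ht)

/-- Since `0⁻¹ = 0`, this is the Moore–Penrose pseudo-inverse of `√S`, and `supportProj S` is
the projection onto the range of `S`. -/
noncomputable def pinvSqrt (S : Matrix n n 𝕜) : Matrix n n 𝕜 := cfc (fun t => (√t)⁻¹) S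

noncomputable def supportProj (S : Matrix n n 𝕜) : Matrix n n 𝕜 := cfc (fun t => √t * (√t)⁻¹) S

theorem isSelfAdjoint_pinvSqrt : IsSelfAdjoint (pinvSqrt S) := cfc_predicate _ S

theorem isSelfAdjoint_supportProj : IsSelfAdjoint (supportProj S) := cfc_predicate _ S

theorem cfc_sqrt_mul_self (hS : 0 ≤ S) : cfc Real.sqrt S * cfc Real.sqrt S = S := by
  rw [cfc_mul_cfc_of_nonneg hS (f := Real.sqrt) (g := Real.sqrt) (h := id)
    fun t ht => Real.mul_self_sqrt ht, cfc_id ℝ S]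

theorem cfc_sqrt_mul_pinvSqrt (hS : 0 ≤ S) : cfc Real.sqrt S * pinvSqrt S = supportProj S :=
  cfc_mul_cfc_of_nonneg hS fun _ _ => rfl

theorem pinvSqrt_mul_cfc_sqrt (hS : 0 ≤ S) : pinvSqrt S * cfc Real.sqrt S = supportProj S :=
  cfc_mul_cfc_of_nonneg hS fun _ _ => mul_comm _ _

theorem cfc_sqrt_mul_supportProj (hS : 0 ≤ S) :
    cfc Real.sqrt S * supportProj S = cfc Real.sqrt S :=
  cfc_mul_cfc_of_nonneg hS fun t _ => by
    rcases eq_or_ne (√t) 0 with h | h <;> field_simp [h]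

theorem supportProj_le_one : supportProj S ≤ 1 :=
  cfc_le_one _ _ fun t _ => by
    rcases eq_or_ne (√t) 0 with h | h <;> simp [h]

theorem pinvSqrt_mul_mul_pinvSqrt_self (hS : 0 ≤ S) :
    pinvSqrt S * S * pinvSqrt S = supportProj S :=
  calc pinvSqrt S * S * pinvSqrt S
      = pinvSqrt S * (cfc Real.sqrt S * cfc Real.sqrt S) * pinvSqrt S := by
        rw [cfc_sqrt_mul_self hS]
    _ = supportProj S * supportProj S := by
        rw [← mul_assoc, pinvSqrt_mul_cfc_sqrt hS, mul_assoc, cfc_sqrt_mul_pinvSqrt hS]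
    _ = supportProj S := cfc_mul_cfc_of_nonneg hS fun t _ => by
        rcases eq_or_ne (√t) 0 with h | h <;> field_simp [h]

theorem mul_one_sub_supportProj (hS : 0 ≤ S) : S * (1 - supportProj S) = 0 :=
  calc S * (1 - supportProj S)
      = cfc Real.sqrt S * (cfc Real.sqrt S * (1 - supportProj S)) := by
        rw [← mul_assoc, cfc_sqrt_mul_self hS]
    _ = 0 := by rw [mul_sub, mul_one, cfc_sqrt_mul_supportProj hS, sub_self, mul_zero]

theorem supportProj_mul_mul_supportProj_of_le {A : Matrix n n 𝕜} (hS : 0 ≤ S) (hA : 0 ≤ A)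
    (hAS : A ≤ S) : supportProj S * A * supportProj S = A := by
  have hAP : A * supportProj S = A := by
    simpa [mul_sub, sub_eq_zero, eq_comm] using
      mul_eq_zero_of_le hA hAS (mul_one_sub_supportProj hS)
  have hPA : supportProj S * A = A := by
    simpa [star_mul, isSelfAdjoint_supportProj.star_eq, hA.isSelfAdjoint.star_eq] using
      congrArg star hAP
  rw [hPA, hAP]

theorem cfc_sqrt_mul_conj_pinvSqrt_mul_cfc_sqrt {A : Matrix n n 𝕜} (hS : 0 ≤ S) (hA : 0 ≤ A)
    (hAS : A ≤ S) : cfc Real.sqrt S * (pinvSqrt S * A * pinvSqrt S) * cfc Real.sqrt S = A := by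
  simp only [← mul_assoc, cfc_sqrt_mul_pinvSqrt hS]
  rw [mul_assoc _ _ (cfc Real.sqrt S), pinvSqrt_mul_cfc_sqrt hS,
    supportProj_mul_mul_supportProj_of_le hS hA hAS]

theorem cfc_sqrt_mul_one_sub_supportProj_mul_cfc_sqrt (hS : 0 ≤ S) :
    cfc Real.sqrt S * (1 - supportProj S) * cfc Real.sqrt S = 0 := by
  rw [mul_sub, mul_one, cfc_sqrt_mul_supportProj hS, sub_self, zero_mul]

theorem exists_povm_cfc_sqrt_mul_mul_cfc_sqrt {ι χ : Type*} [Fintype ι] [DecidableEq ι] (a₀ : ι)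
    {σ : ι → χ → Matrix n n 𝕜} (hS : 0 ≤ S) (hσ : ∀ a x, 0 ≤ σ a x)
    (hσS : ∀ x, ∑ a, σ a x = S) :
    ∃ M : ι → χ → Matrix n n 𝕜, (∀ a x, 0 ≤ M a x) ∧ (∀ x, ∑ a, M a x = 1) ∧
      ∀ a x, cfc Real.sqrt S * M a x * cfc Real.sqrt S = σ a x := by
  have hσle : ∀ a x, σ a x ≤ S := fun a x =>
    hσS x ▸ Finset.single_le_sum (fun a _ => hσ a x) (Finset.mem_univ a)
  refine ⟨fun a x => pinvSqrt S * σ a x * pinvSqrt S + if a = a₀ then 1 - supportProj S else 0,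
    fun a x => add_nonneg ?_ ?_, fun x => ?_, fun a x => ?_⟩
  · simpa [isSelfAdjoint_pinvSqrt.star_eq] using star_left_conjugate_nonneg (hσ a x) (pinvSqrt S)
  · split_ifs
    exacts [sub_nonneg.mpr supportProj_le_one, le_rfl]
  · rw [Finset.sum_add_distrib, ← Finset.sum_mul, ← Finset.mul_sum, hσS x,
      pinvSqrt_mul_mul_pinvSqrt_self hS, Finset.sum_ite_eq', if_pos (Finset.mem_univ a₀),
      add_sub_cancel]
  · rw [mul_add, add_mul, cfc_sqrt_mul_conj_pinvSqrt_mul_cfc_sqrt hS (hσ a x) (hσle a x)]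
    split_ifs
    · rw [cfc_sqrt_mul_one_sub_supportProj_mul_cfc_sqrt hS, add_zero]
    · rw [mul_zero, zero_mul, add_zero]

end Matrix

/-- Gisin–HJW theorem: every no-signaling assemblage on `Mₙ(ℂ)` admits a quantum
realization: `σ_{a|x} = Tr₁((M_{a|x} ⊗ 1) ρ)` for a density matrix `ρ` and POVMs `M`. -/
theorem stmt8 {n m k : ℕ}
    (σ : Fin k → Fin m → Matrix (Fin n) (Fin n) ℂ)
    (S : Matrix (Fin n) (Fin n) ℂ) (hS : S.PosSemidef) (hStr : S.trace = 1)
    (hpos : ∀ a x, (σ a x).PosSemidef)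
    (hsum : ∀ x, ∑ a, σ a x = S) :
    ∃ (d : ℕ) (ρ : Matrix (Fin d × Fin n) (Fin d × Fin n) ℂ)
      (M : Fin k → Fin m → Matrix (Fin d) (Fin d) ℂ),
      ρ.PosSemidef ∧ ρ.trace = 1 ∧
      (∀ a x, (M a x).PosSemidef) ∧ (∀ x, ∑ a, M a x = 1) ∧
      ∀ a x i j, σ a x i j =
        ∑ t : Fin d,
          ((kroneckerMap (· * ·) (M a x) (1 : Matrix (Fin n) (Fin n) ℂ)) * ρ) (t, i) (t, j) := by
  set R := cfc Real.sqrt S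
  have hR : Rᴴ = R := (cfc_predicate Real.sqrt S).star_eq
  have hρ := posSemidef_vecMulVec_self_star (vec R)
  have hρtr : (vecMulVec (vec R) (star (vec R))).trace = 1 := by
    rw [trace_vecMulVec_vec_star, hR, cfc_sqrt_mul_self hS.nonneg, hStr]
  rcases isEmpty_or_nonempty (Fin k) with _ | ⟨⟨a₀⟩⟩
  · -- with no outcomes `S = 0`, contradicting `S.trace = 1` unless there are no settings
    have : IsEmpty (Fin m) := ⟨fun x => by simp [← hsum x] at hStr⟩
    exact ⟨n, _, isEmptyElim, hρ, hρtr, isEmptyElim, isEmptyElim, isEmptyElim⟩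
  obtain ⟨M, hM, hMsum, hMσ⟩ :=
    exists_povm_cfc_sqrt_mul_mul_cfc_sqrt a₀ hS.nonneg (fun a x => (hpos a x).nonneg) hsum
  refine ⟨n, _, fun a x => (M a x)ᵀ, hρ, hρtr, fun a x => (hM a x).posSemidef.transpose,
    fun x => by rw [← transpose_sum, hMsum, transpose_one], fun a x i j => ?_⟩
  rw [sum_kronecker_one_mul_vecMulVec_vec_apply, transpose_transpose, hR, hMσ]
end

section
/- Suppose {σ_{a|x}} is a no-signaling assemblage on a unital C*-algebra B with associated state σ = Σₐ σ_{a|x}. Let (H, π, Ω) be the GNS representation of σ. Then for each a, x there exists a positive operator M_{a|x} ∈ π(B)′ with 0 ≤ M_{a|x} ≤ 1, Σₐ M_{a|x} = 1, and σ_{a|x}(b) = ⟨Ω, π(b) M_{a|x} Ω⟩ for all b ∈ B. -/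
/-!
Each `σ a x` is a positive functional dominated by the vector state `⟪Ω, π (·) Ω⟫`, because the
`σ a x` sum over `a` to that state. By Cauchy–Schwarz, `(π b Ω, π c Ω) ↦ σ a x (b⋆ c)` is then a
well-defined sesquilinear form of norm at most `1` on the dense subspace `π(B) Ω`, so it is
represented by an operator `0 ≤ M a x ≤ 1` (a Radon–Nikodym derivative). Moving `π d` to the other
side of the form as `π d⋆` shows that `M a x` lies in the commutant of `π(B)`; summing the forms
over `a` gives back the inner product, so `∑ a, M a x = 1`; and `c = 1` gives the formula for `σ`.
-/

open scoped ComplexOrder InnerProductSpace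

section PositiveFunctional

variable {B : Type*} [Ring B] [StarRing B] [Algebra ℂ B] [StarModule ℂ B]

def IsPositiveFunctional (τ : B →ₗ[ℂ] ℂ) : Prop := ∀ b, 0 ≤ τ (star b * b)

def starMulForm (τ : B →ₗ[ℂ] ℂ) : B →ₗ⋆[ℂ] B →ₗ[ℂ] ℂ :=
  LinearMap.mk₂'ₛₗ (starRingEnd ℂ) (RingHom.id ℂ) (fun b c => τ (star b * c))
    (fun _ _ _ => by simp [add_mul]) (fun _ _ _ => by simp)
    (fun _ _ _ => by simp [mul_add]) (fun _ _ _ => by simp)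

@[simp]
theorem starMulForm_apply (τ : B →ₗ[ℂ] ℂ) (b c : B) : starMulForm τ b c = τ (star b * c) := rfl

namespace IsPositiveFunctional

variable {τ : B →ₗ[ℂ] ℂ}

/-- Polarization: the imaginary parts of `τ ((b + c)⋆ (b + c))` and
`τ ((b + i c)⋆ (b + i c))` vanish. -/
theorem conj_apply_star_mul (hτ : IsPositiveFunctional τ) (b c : B) :
    starRingEnd ℂ (τ (star b * c)) = τ (star c * b) := by
  have him : ∀ a, (τ (star a * a)).im = 0 := fun a => (Complex.nonneg_iff.1 (hτ a)).2.symm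
  have hadd := him (b + c)
  have hrot := him (b + Complex.I • c)
  simp only [star_add, star_smul, add_mul, mul_add, smul_mul_assoc, mul_smul_comm, map_add,
    map_smul, Complex.star_def, Complex.conj_I, smul_eq_mul, Complex.add_im, Complex.mul_im,
    Complex.mul_re, Complex.neg_re, Complex.neg_im, Complex.I_re, Complex.I_im, him b, him c]
    at hadd hrot
  apply Complex.ext <;> simp <;> linarith

theorem norm_apply_star_mul_sq_le (hτ : IsPositiveFunctional τ) (b c : B) :
    ‖τ (star b * c)‖ ^ 2 ≤ (τ (star b * b)).re * (τ (star c * c)).re := by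
  let core : PreInnerProductSpace.Core ℂ B :=
    { inner := fun x y => τ (star x * y)
      conj_inner_symm := fun x y => hτ.conj_apply_star_mul y x
      re_inner_nonneg := fun x => (Complex.nonneg_iff.1 (hτ x)).1
      add_left := fun x y z => by simp [add_mul]
      smul_left := fun x y r => by simp }
  have h : ‖τ (star b * c)‖ * ‖τ (star c * b)‖ ≤ (τ (star b * b)).re * (τ (star c * c)).re :=
    @InnerProductSpace.Core.inner_mul_inner_self_le ℂ B _ _ _ core b c
  rwa [← hτ.conj_apply_star_mul b c, Complex.norm_conj, ← sq] at h

end IsPositiveFunctional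

end PositiveFunctional

section DenseRange

variable {𝕜 E H : Type*} [RCLike 𝕜] [NormedAddCommGroup H] [InnerProductSpace 𝕜 H]

theorem ContinuousLinearMap.ext_of_inner_denseRange {f : E → H} (hf : DenseRange f)
    {S T : H →L[𝕜] H} (h : ∀ i j, ⟪f i, S (f j)⟫_𝕜 = ⟪f i, T (f j)⟫_𝕜) : S = T :=
  coeFn_injective <| hf.equalizer S.continuous T.continuous <|
    funext fun j => hf.eq_of_inner_right 𝕜 fun i => h i j

variable [AddCommGroup E] [Module 𝕜 E] [CompleteSpace H]

/-- `M` is the adjoint of the extension of `b ↦ (toDual 𝕜 H).symm (f b)`, which is linear because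
both `f` and the Riesz map `toDual` are conjugate-linear. -/
theorem exists_inner_apply_eq_of_denseRange {L : E →ₗ[𝕜] H} (hL : DenseRange L)
    (f : E →ₗ⋆[𝕜] E →ₗ[𝕜] 𝕜) (hf : ∀ b c, ‖f b c‖ ≤ ‖L b‖ * ‖L c‖) :
    ∃ M : H →L[𝕜] H, ∀ b c, ⟪L b, M (L c)⟫_𝕜 = f b c := by
  set T : E → (H →L[𝕜] 𝕜) := fun b => (f b).extendOfNorm L
  have hT : ∀ b c, T b (L c) = f b c := fun b c =>
    LinearMap.extendOfNorm_eq hL ⟨‖L b‖, hf b⟩ c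
  have hT_unique : ∀ b (φ : H →L[𝕜] 𝕜), (∀ c, φ (L c) = f b c) → T b = φ := fun b φ hφ =>
    LinearMap.extendOfNorm_unique hL _ (hf b) φ (LinearMap.ext hφ)
  let Tₛₗ : E →ₗ⋆[𝕜] (H →L[𝕜] 𝕜) :=
    { toFun := T
      map_add' := fun b b' => hT_unique _ _ fun c => by simp [hT]
      map_smul' := fun r b => hT_unique _ _ fun c => by simp [hT] }
  let U : E →ₗ[𝕜] H := (InnerProductSpace.toDual 𝕜 H).symm.toLinearMap ∘ₛₗ Tₛₗ
  have hU : ∀ b, ‖U b‖ ≤ 1 * ‖L b‖ := fun b => by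
    simpa [U, Tₛₗ] using LinearMap.opNorm_extendOfNorm_le hL (norm_nonneg _) (hf b)
  refine ⟨ContinuousLinearMap.adjoint (U.extendOfNorm L), fun b c => ?_⟩
  rw [ContinuousLinearMap.adjoint_inner_right, LinearMap.extendOfNorm_eq hL ⟨1, hU⟩]
  simp [U, Tₛₗ, hT]

end DenseRange

theorem ContinuousLinearMap.isPositive_of_denseRange {E H : Type*} [NormedAddCommGroup H]
    [InnerProductSpace ℂ H] {f : E → H} (hf : DenseRange f) {T : H →L[ℂ] H}
    (h : ∀ i, 0 ≤ ⟪f i, T (f i)⟫_ℂ) : T.IsPositive := by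
  have hclosed : IsClosed {x : H | 0 ≤ ⟪x, T x⟫_ℂ} :=
    isClosed_le continuous_const (by fun_prop)
  have hnonneg : ∀ x, 0 ≤ ⟪T x, x⟫_ℂ := fun x => by
    rw [← inner_conj_symm]
    exact star_nonneg_iff.2 <| hf.induction_on (p := fun x => 0 ≤ ⟪x, T x⟫_ℂ) x hclosed h
  exact (isPositive_iff T).2 ⟨(LinearMap.isSymmetric_iff_inner_map_self_real _).2 fun x =>
    (hnonneg x).isSelfAdjoint, hnonneg⟩

section Representation

variable {B H : Type*} [Ring B] [StarRing B] [Algebra ℂ B]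
  [NormedAddCommGroup H] [InnerProductSpace ℂ H] [CompleteSpace H] (π : B →⋆ₐ[ℂ] (H →L[ℂ] H))

theorem inner_map_star_apply (b : B) (x y : H) : ⟪π (star b) x, y⟫_ℂ = ⟪x, π b y⟫_ℂ := by
  rw [map_star, ContinuousLinearMap.star_eq_adjoint, ContinuousLinearMap.adjoint_inner_left]

theorem inner_map_star_mul_apply (b c : B) (x y : H) :
    ⟪x, π (star b * c) y⟫_ℂ = ⟪π b x, π c y⟫_ℂ := by
  rw [map_mul, mul_apply_eq_comp, ← inner_map_star_apply, star_star]

variable [StarModule ℂ B]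

theorem IsPositiveFunctional.exists_commute_radonNikodym {Ω : H}
    (hcyc : Dense (Set.range fun b : B => π b Ω)) {τ : B →ₗ[ℂ] ℂ} (hτ : IsPositiveFunctional τ)
    (hle : ∀ b, τ (star b * b) ≤ ⟪Ω, π (star b * b) Ω⟫_ℂ) :
    ∃ M : H →L[ℂ] H, M.IsPositive ∧ (1 - M).IsPositive ∧ (∀ d, Commute M (π d)) ∧
      ∀ b c, ⟪π b Ω, M (π c Ω)⟫_ℂ = τ (star b * c) := by
  let L : B →ₗ[ℂ] H := (ContinuousLinearMap.apply ℂ H Ω).toLinearMap ∘ₗ π.toLinearMap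
  have hL : DenseRange L := hcyc
  have hre : ∀ b, (τ (star b * b)).re ≤ ‖L b‖ ^ 2 := fun b => by
    have h := (Complex.le_def.1 (hle b)).1
    rw [inner_map_star_mul_apply] at h
    exact h.trans_eq (inner_self_eq_norm_sq (𝕜 := ℂ) _)
  have hbound : ∀ b c, ‖starMulForm τ b c‖ ≤ ‖L b‖ * ‖L c‖ := fun b c => by
    rw [← sq_le_sq₀ (norm_nonneg _) (by positivity), mul_pow]
    exact (hτ.norm_apply_star_mul_sq_le b c).trans <| mul_le_mul (hre b) (hre c)
      (Complex.nonneg_iff.1 (hτ c)).1 (sq_nonneg _)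
  obtain ⟨M, hM⟩ := exists_inner_apply_eq_of_denseRange hL (starMulForm τ) hbound
  replace hM : ∀ b c, ⟪π b Ω, M (π c Ω)⟫_ℂ = τ (star b * c) := hM
  refine ⟨M, ?_, ?_, fun d => ?_, hM⟩
  · exact ContinuousLinearMap.isPositive_of_denseRange hcyc fun b => (hM b b).symm ▸ hτ b
  · refine ContinuousLinearMap.isPositive_of_denseRange hcyc fun b => ?_
    rw [sub_apply, inner_sub_right, hM, one_apply_eq_self, ← inner_map_star_mul_apply]
    exact sub_nonneg.2 (hle b)
  · refine ContinuousLinearMap.ext_of_inner_denseRange hcyc fun b c => ?_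
    calc ⟪π b Ω, (M * π d) (π c Ω)⟫_ℂ = ⟪π b Ω, M (π (d * c) Ω)⟫_ℂ := by
          rw [map_mul, mul_apply_eq_comp, mul_apply_eq_comp]
      _ = ⟪π (star d * b) Ω, M (π c Ω)⟫_ℂ := by rw [hM, hM, star_mul, star_star, mul_assoc]
      _ = ⟪π b Ω, (π d * M) (π c Ω)⟫_ℂ := by
          rw [map_mul, mul_apply_eq_comp, mul_apply_eq_comp, inner_map_star_apply]

end Representation

theorem stmt9_general {B : Type*} [NormedRing B] [StarRing B] [NormedAlgebra ℂ B]
    [StarModule ℂ B]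
    {H : Type*} [NormedAddCommGroup H] [InnerProductSpace ℂ H] [CompleteSpace H]
    {m k : ℕ}
    (σ : Fin k → Fin m → (B →L[ℂ] ℂ))
    (hpos : ∀ a x, ∀ b : B, 0 ≤ σ a x (star b * b))
    (π : B →⋆ₐ[ℂ] (H →L[ℂ] H)) (Ω : H)
    (hcyc : Dense (Set.range fun b : B => π b Ω))
    (hGNS : ∀ x, ∀ b : B, ∑ a, σ a x b = ⟪Ω, π b Ω⟫_ℂ) :
    ∃ M : Fin k → Fin m → (H →L[ℂ] H),
      (∀ a x, (M a x).IsPositive) ∧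
      (∀ a x, ((1 : H →L[ℂ] H) - M a x).IsPositive) ∧
      (∀ x, ∑ a, M a x = 1) ∧
      (∀ a x, ∀ b : B, Commute (M a x) (π b)) ∧
      ∀ a x, ∀ b : B, σ a x b = ⟪Ω, π b (M a x Ω)⟫_ℂ := by
  have hle : ∀ a x b, σ a x (star b * b) ≤ ⟪Ω, π (star b * b) Ω⟫_ℂ := fun a x b => by
    rw [← hGNS x]
    exact Finset.single_le_sum (fun a' _ => hpos a' x b) (Finset.mem_univ a)
  choose M hM hM_le hcomm hinner using fun a x =>
    IsPositiveFunctional.exists_commute_radonNikodym π hcyc (τ := (σ a x : B →ₗ[ℂ] ℂ))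
      (hpos a x) (hle a x)
  simp only [ContinuousLinearMap.coe_coe] at hinner
  refine ⟨M, hM, hM_le, fun x => ?_, hcomm, fun a x b => ?_⟩
  · refine ContinuousLinearMap.ext_of_inner_denseRange hcyc fun b c => ?_
    rw [sum_apply, inner_sum, one_apply_eq_self, ← inner_map_star_mul_apply, ← hGNS]
    exact Finset.sum_congr rfl fun a _ => hinner a x b c
  · calc σ a x b = ⟪π (star b) Ω, M a x (π 1 Ω)⟫_ℂ := by rw [hinner, star_star, mul_one]
      _ = ⟪Ω, π b (M a x Ω)⟫_ℂ := by rw [inner_map_star_apply, map_one, one_apply_eq_self]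

/-- In the GNS representation of the marginal state of a no-signaling assemblage, the
assemblage is implemented by a POVM in the commutant of the image of the representation. -/
theorem stmt9 {B : Type*} [NormedRing B] [StarRing B] [CStarRing B] [NormedAlgebra ℂ B]
    [StarModule ℂ B] [CompleteSpace B]
    {H : Type*} [NormedAddCommGroup H] [InnerProductSpace ℂ H] [CompleteSpace H]
    {m k : ℕ}
    (σ : Fin k → Fin m → (B →L[ℂ] ℂ))
    (hpos : ∀ a x, ∀ b : B, 0 ≤ σ a x (star b * b))
    (π : B →⋆ₐ[ℂ] (H →L[ℂ] H)) (Ω : H) (hΩ : ‖Ω‖ = 1)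
    (hcyc : Dense (Set.range fun b : B => π b Ω))
    (hGNS : ∀ x, ∀ b : B, ∑ a, σ a x b = ⟪Ω, π b Ω⟫_ℂ) :
    ∃ M : Fin k → Fin m → (H →L[ℂ] H),
      (∀ a x, (M a x).IsPositive) ∧
      (∀ a x, ((1 : H →L[ℂ] H) - M a x).IsPositive) ∧
      (∀ x, ∑ a, M a x = 1) ∧
      (∀ a x, ∀ b : B, Commute (M a x) (π b)) ∧
      ∀ a x, ∀ b : B, σ a x b = ⟪Ω, π b (M a x Ω)⟫_ℂ :=
  stmt9_general σ hpos π Ω hcyc hGNS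
end
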